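/- arXiv:2410.09766 — 2 statements merged into one kernel-verified Lean document; each statement's English description precedes it below -/
import Mathlib

section
/- Let Z_1, …, Z_n be independent random variables taking values in a measurable space 𝒵, and let f : 𝒵^n → ℝ be a measurable function such that for every i ∈ [n] and all z_1, …, z_n, z_i' ∈ 𝒵, |f(z_1, …, z_{i−1}, z_i, z_{i+1}, …, z_n) − f(z_1, …, z_{i−1}, z_i', z_{i+1}, …, z_n)| ≤ β. Then for every p > 1, (E|f(Z_1, …, Z_n) − E f(Z_1, …, Z_n)|^p)^{1/p} ≤ √(2pn) · β. -/
/-!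
Integrating out the first coordinate (Fubini), the section `z ↦ f (z, S')` oscillates by at most
`c₀`, so by Hoeffding's lemma its mgf is at most `exp (t G(S') + c₀² t² / 2)`, where `G` is its
mean over `z`. The function `G` of the remaining coordinates again has bounded differences, so
induction shows that `f - E f` is sub-Gaussian with variance proxy `∑ cᵢ²`.

For a sub-Gaussian `X` with proxy `c`, integrating `|x|^p ≤ (p/s)^p e^{-p} (e^{sx} + e^{-sx})` at
`s = √(p/c)` gives `E|X|^p ≤ 2 (pc/e)^{p/2}`, and `2^{1/p} √(pc/e) ≤ √(2pc)` for `p ≥ 1`.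
-/

open MeasureTheory ProbabilityTheory Real Function
open scoped NNReal

theorem div_rpow_le_exp_sub {u p : ℝ} (hu : 0 ≤ u) (hp : 0 < p) :
    (u / p) ^ p ≤ exp (u - p) := by
  rcases hu.eq_or_lt with rfl | hu
  · rw [zero_div, zero_rpow hp.ne']
    exact (exp_pos _).le
  · rw [rpow_def_of_pos (div_pos hu hp), exp_le_exp]
    calc log (u / p) * p ≤ (u / p - 1) * p := by
          gcongr
          exact log_le_sub_one_of_pos (by positivity)
      _ = u - p := by field_simp

theorem abs_rpow_le_mul_exp_add_exp {p s : ℝ} (hp : 0 < p) (hs : 0 < s) (x : ℝ) :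
    |x| ^ p ≤ (p / s) ^ p * exp (-p) * (exp (s * x) + exp (-s * x)) := by
  have hexp : exp (s * |x|) ≤ exp (s * x) + exp (-s * x) := by
    rcases abs_cases x with ⟨hx, -⟩ | ⟨hx, -⟩ <;> rw [hx]
    · exact le_add_of_nonneg_right (exp_pos _).le
    · rw [mul_neg, ← neg_mul]
      exact le_add_of_nonneg_left (exp_pos _).le
  calc |x| ^ p = (p / s) ^ p * (s * |x| / p) ^ p := by
        rw [← mul_rpow (by positivity) (by positivity)]
        congr 1
        field_simp
    _ ≤ (p / s) ^ p * exp (s * |x| - p) := by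
        gcongr
        exact div_rpow_le_exp_sub (by positivity) hp
    _ ≤ (p / s) ^ p * exp (-p) * (exp (s * x) + exp (-s * x)) := by
        rw [sub_eq_add_neg, exp_add, mul_comm (exp _), ← mul_assoc]
        gcongr

namespace ProbabilityTheory.HasSubgaussianMGF

variable {Ω : Type*} [MeasurableSpace Ω] {μ : Measure Ω} {X : Ω → ℝ} {c : ℝ≥0} {p : ℝ}

theorem integral_abs_rpow_le (h : HasSubgaussianMGF X c μ) (hp : 0 < p) :
    ∫ ω, |X ω| ^ p ∂μ ≤ 2 * (p * c / exp 1) ^ (p / 2) := by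
  rcases eq_or_ne c 0 with rfl | hc
  · have hX : (fun ω => |X ω| ^ p) =ᵐ[μ] 0 :=
      h.ae_eq_zero_of_hasSubgaussianMGF_zero.mono fun ω hω => by simp [hω, zero_rpow hp.ne']
    simp [integral_congr_ae hX, zero_rpow (half_pos hp).ne']
  have hc : (0 : ℝ) < c := by positivity
  set s := √(p / c)
  have hs : 0 < s := by positivity
  have hcs : c * s ^ 2 = p := by
    rw [sq_sqrt (by positivity)]
    field_simp
  have hps : (p / s) ^ p = (p * c) ^ (p / 2) := by
    rw [show p * c = (p / s) ^ 2 by rw [div_pow, sq_sqrt (by positivity)]; field_simp,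
      ← rpow_two, ← rpow_mul (by positivity)]
    ring_nf
  calc ∫ ω, |X ω| ^ p ∂μ
      ≤ ∫ ω, (p / s) ^ p * exp (-p) * (exp (s * X ω) + exp (-s * X ω)) ∂μ :=
        integral_mono_of_nonneg (ae_of_all _ fun _ => by positivity)
          (((h.integrable_exp_mul s).add (h.integrable_exp_mul (-s))).const_mul _)
          (ae_of_all _ fun ω => abs_rpow_le_mul_exp_add_exp hp hs (X ω))
    _ = (p / s) ^ p * exp (-p) * (mgf X μ s + mgf X μ (-s)) := by
        rw [integral_const_mul, integral_add (h.integrable_exp_mul s) (h.integrable_exp_mul (-s))]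
        rfl
    _ ≤ (p / s) ^ p * exp (-p) * (exp (c * s ^ 2 / 2) + exp (c * (-s) ^ 2 / 2)) := by
        gcongr
        · exact h.mgf_le s
        · exact h.mgf_le (-s)
    _ = 2 * (p * c / exp 1) ^ (p / 2) := by
        have hexp : exp p = exp (p / 2) * exp (p / 2) := by rw [← exp_add, add_halves]
        rw [neg_sq, hcs, hps, div_rpow (by positivity) (exp_pos 1).le, exp_one_rpow, exp_neg,
          hexp]
        field_simp
        ring

theorem rpow_integral_abs_rpow_le (h : HasSubgaussianMGF X c μ) (hp : 1 ≤ p) :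
    (∫ ω, |X ω| ^ p ∂μ) ^ (1 / p) ≤ √(2 * p * c) := by
  have hp₀ : 0 < p := by linarith
  calc (∫ ω, |X ω| ^ p ∂μ) ^ (1 / p)
      ≤ (2 * (p * c / exp 1) ^ (p / 2)) ^ (1 / p) :=
        rpow_le_rpow (integral_nonneg fun _ => by positivity) (h.integral_abs_rpow_le hp₀)
          (by positivity)
    _ = 2 ^ (1 / p) * √(p * c / exp 1) := by
        rw [mul_rpow (by positivity) (by positivity), ← rpow_mul (by positivity), sqrt_eq_rpow]
        congr 2
        field_simp
    _ ≤ 2 * √(p * c / exp 1) := by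
        gcongr
        calc (2 : ℝ) ^ (1 / p) ≤ 2 ^ (1 : ℝ) :=
              rpow_le_rpow_of_exponent_le one_le_two ((div_le_one hp₀).2 hp)
          _ = 2 := rpow_one 2
    _ ≤ √(2 * p * c) := by
        rw [le_sqrt (by positivity) (by positivity), mul_pow, sq_sqrt (by positivity)]
        have he : 2 ≤ exp 1 := by linarith [add_one_le_exp 1]
        calc 2 ^ 2 * (p * c / exp 1) ≤ 2 ^ 2 * (p * c / 2) := by gcongr
          _ = 2 * p * c := by ring

end ProbabilityTheory.HasSubgaussianMGF

theorem mgf_le_exp_of_abs_sub_le {Ω : Type*} [MeasurableSpace Ω] {m : Measure Ω}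
    [IsProbabilityMeasure m] {g : Ω → ℝ} (hg : AEMeasurable g m) {c : ℝ≥0}
    (hgc : ∀ x y, |g x - g y| ≤ c) (t : ℝ) :
    mgf g m t ≤ exp (t * ∫ x, g x ∂m + c ^ 2 * t ^ 2 / 2) := by
  obtain ⟨x₀⟩ := nonempty_of_isProbabilityMeasure m
  have hIcc : ∀ᵐ x ∂m, g x ∈ Set.Icc (g x₀ - c) (g x₀ + c) :=
    ae_of_all _ fun x => by
      have := abs_le.1 (hgc x x₀)
      constructor <;> linarith
  have h := (hasSubgaussianMGF_of_mem_Icc hg hIcc).mgf_le t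
  have hc : ((‖g x₀ + c - (g x₀ - c)‖₊ / 2) ^ 2 : ℝ≥0) = c ^ 2 := by
    ext
    simp only [NNReal.coe_pow, NNReal.coe_div, coe_nnnorm, NNReal.coe_ofNat]
    rw [show g x₀ + c - (g x₀ - c) = 2 * c by ring, norm_mul, Real.norm_two, NNReal.norm_eq]
    ring
  rw [hc] at h
  simp only [sub_eq_add_neg, mgf_add_const] at h
  push_cast at h
  calc mgf g m t = mgf g m t * exp (t * -∫ x, g x ∂m) * exp (t * ∫ x, g x ∂m) := by
        rw [mul_assoc, ← exp_add]
        simp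
    _ ≤ exp (c ^ 2 * t ^ 2 / 2) * exp (t * ∫ x, g x ∂m) := by gcongr
    _ = exp (t * ∫ x, g x ∂m + c ^ 2 * t ^ 2 / 2) := by rw [← exp_add, add_comm]

section FinCons

variable {Z : Type*} [MeasurableSpace Z] {n : ℕ}

theorem measurableEmbedding_fin_cons :
    MeasurableEmbedding (fun q : Z × (Fin n → Z) => (Fin.cons q.1 q.2 : Fin (n + 1) → Z)) := by
  have h := (MeasurableEquiv.piFinSuccAbove (fun _ : Fin (n + 1) => Z) 0).symm.measurableEmbedding
  simp only [MeasurableEquiv.piFinSuccAbove_symm_apply, Fin.insertNthEquiv_zero] at h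
  exact h

theorem measurable_fin_cons_left (S' : Fin n → Z) :
    Measurable (fun z : Z => (Fin.cons z S' : Fin (n + 1) → Z)) :=
  measurableEmbedding_fin_cons.measurable.comp (measurable_id.prodMk measurable_const)

theorem measurePreserving_fin_cons (μ : Fin (n + 1) → Measure Z) [∀ i, SigmaFinite (μ i)] :
    MeasurePreserving (fun q : Z × (Fin n → Z) => (Fin.cons q.1 q.2 : Fin (n + 1) → Z))
      ((μ 0).prod (Measure.pi fun j => μ j.succ)) (Measure.pi μ) := by
  have h := (measurePreserving_piFinSuccAbove μ 0).symm _
  simp only [MeasurableEquiv.piFinSuccAbove_symm_apply, Fin.insertNthEquiv_zero,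
    Fin.succAbove_zero] at h
  exact h

theorem integral_pi_fin_succ (μ : Fin (n + 1) → Measure Z) [∀ i, SigmaFinite (μ i)]
    {g : (Fin (n + 1) → Z) → ℝ} (hg : Integrable g (Measure.pi μ)) :
    ∫ S, g S ∂Measure.pi μ
      = ∫ S', ∫ z, g (Fin.cons z S') ∂μ 0 ∂Measure.pi (fun j => μ j.succ) := by
  have hcons := measurePreserving_fin_cons μ
  rw [← hcons.integral_comp measurableEmbedding_fin_cons]
  exact integral_prod_symm _ ((hcons.integrable_comp_emb measurableEmbedding_fin_cons).2 hg)

end FinCons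

def BoundedDifferences {ι Z : Type*} [DecidableEq ι] (f : (ι → Z) → ℝ) (c : ι → ℝ≥0) : Prop :=
  ∀ i S z, |f S - f (update S i z)| ≤ c i

namespace BoundedDifferences

section Fintype

variable {ι Z : Type*} [DecidableEq ι] [Fintype ι] {f : (ι → Z) → ℝ} {c : ι → ℝ≥0}

theorem abs_sub_le_sum (hf : BoundedDifferences f c) (S S' : ι → Z) :
    |f S - f S'| ≤ ∑ i, (c i : ℝ) := by
  suffices h : ∀ s : Finset ι, |f S - f (s.piecewise S' S)| ≤ ∑ i ∈ s, (c i : ℝ) by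
    simpa using h Finset.univ
  intro s
  induction s using Finset.induction_on with
  | empty => simp
  | insert i s hi ih =>
    rw [Finset.piecewise_insert, Finset.sum_insert hi, add_comm]
    exact (abs_sub_le _ (f (s.piecewise S' S)) _).trans (add_le_add ih (hf _ _ _))

theorem exists_abs_le (hf : BoundedDifferences f c) : ∃ C, ∀ S, |f S| ≤ C := by
  rcases isEmpty_or_nonempty (ι → Z) with _ | ⟨⟨S₀⟩⟩
  · exact ⟨0, isEmptyElim⟩
  · refine ⟨|f S₀| + ∑ i, (c i : ℝ), fun S => ?_⟩
    have := hf.abs_sub_le_sum S S₀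
    have := abs_sub_abs_le_abs_sub (f S) (f S₀)
    linarith

end Fintype

variable {Z : Type*} [MeasurableSpace Z] {n : ℕ}

theorem integral_cons {f : (Fin (n + 1) → Z) → ℝ} {c : Fin (n + 1) → ℝ≥0}
    (hf : BoundedDifferences f c) (hfm : Measurable f) (m : Measure Z) [IsProbabilityMeasure m] :
    BoundedDifferences (fun S' => ∫ z, f (Fin.cons z S') ∂m) (fun j => c j.succ) := by
  intro j S' w
  obtain ⟨C, hC⟩ := hf.exists_abs_le
  have hint : ∀ S' : Fin n → Z, Integrable (fun z => f (Fin.cons z S')) m := fun S' =>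
    .of_bound (hfm.comp (measurable_fin_cons_left S')).aestronglyMeasurable C
      (ae_of_all _ fun _ => hC _)
  rw [← integral_sub (hint S') (hint _)]
  simp_rw [Fin.cons_update]
  simpa using norm_integral_le_of_norm_le_const (μ := m)
    (f := fun z => f (Fin.cons z S') - f (update (Fin.cons z S') j.succ w))
    (ae_of_all _ fun z => hf j.succ (Fin.cons z S') w)

theorem mgf_pi_le {f : (Fin n → Z) → ℝ} {c : Fin n → ℝ≥0}
    (hf : BoundedDifferences f c) (hfm : Measurable f) (μ : Fin n → Measure Z)
    [∀ i, IsProbabilityMeasure (μ i)] (t : ℝ) :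
    mgf f (Measure.pi μ) t
      ≤ exp (t * ∫ S, f S ∂Measure.pi μ + (∑ i, c i ^ 2 : ℝ≥0) * t ^ 2 / 2) := by
  induction n with
  | zero => simp [mgf, integral_unique]
  | succ n ih =>
    set ν := Measure.pi fun j : Fin n => μ j.succ
    set G : (Fin n → Z) → ℝ := fun S' => ∫ z, f (Fin.cons z S') ∂μ 0
    have hG : BoundedDifferences G (fun j => c j.succ) := hf.integral_cons hfm (μ 0)
    have hGm : Measurable G := (hfm.comp measurableEmbedding_fin_cons.measurable)
      |>.stronglyMeasurable.integral_prod_left'.measurable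
    obtain ⟨C, hC⟩ := hf.exists_abs_le
    obtain ⟨C', hC'⟩ := hG.exists_abs_le
    have hfG : ∫ S, f S ∂Measure.pi μ = ∫ S', G S' ∂ν :=
      integral_pi_fin_succ μ (.of_bound hfm.aestronglyMeasurable C (ae_of_all _ hC))
    have hsection (S' : Fin n → Z) :
        mgf (fun z => f (Fin.cons z S')) (μ 0) t ≤ exp (t * G S' + c 0 ^ 2 * t ^ 2 / 2) :=
      mgf_le_exp_of_abs_sub_le (hfm.comp (measurable_fin_cons_left S')).aemeasurable
        (fun z z' => by simpa [Fin.update_cons_zero] using hf 0 (Fin.cons z S') z') t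
    calc mgf f (Measure.pi μ) t
        = ∫ S', mgf (fun z => f (Fin.cons z S')) (μ 0) t ∂ν :=
          integral_pi_fin_succ μ (integrable_exp_mul_of_mem_Icc hfm.aemeasurable
            (ae_of_all _ fun S => abs_le.1 (hC S)))
      _ ≤ ∫ S', exp (t * G S') * exp (c 0 ^ 2 * t ^ 2 / 2) ∂ν :=
          integral_mono_of_nonneg (ae_of_all _ fun _ => mgf_nonneg)
            ((integrable_exp_mul_of_mem_Icc hGm.aemeasurable
              (ae_of_all _ fun S' => abs_le.1 (hC' S'))).mul_const _)
            (ae_of_all _ fun S' => (hsection S').trans_eq (exp_add _ _))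
      _ = mgf G ν t * exp (c 0 ^ 2 * t ^ 2 / 2) := integral_mul_const _ _
      _ ≤ exp (t * ∫ S', G S' ∂ν + (∑ j : Fin n, c j.succ ^ 2 : ℝ≥0) * t ^ 2 / 2)
            * exp (c 0 ^ 2 * t ^ 2 / 2) := by
          gcongr
          exact ih hG hGm (fun j => μ j.succ)
      _ = exp (t * ∫ S, f S ∂Measure.pi μ + (∑ i, c i ^ 2 : ℝ≥0) * t ^ 2 / 2) := by
          rw [← exp_add, hfG, Fin.sum_univ_succ]
          push_cast
          ring_nf

theorem hasSubgaussianMGF_pi {f : (Fin n → Z) → ℝ} {c : Fin n → ℝ≥0}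
    (hf : BoundedDifferences f c) (hfm : Measurable f) (μ : Fin n → Measure Z)
    [∀ i, IsProbabilityMeasure (μ i)] :
    HasSubgaussianMGF (fun S => f S - ∫ S', f S' ∂Measure.pi μ) (∑ i, c i ^ 2)
      (Measure.pi μ) where
  integrable_exp_mul t := by
    obtain ⟨C, hC⟩ := hf.exists_abs_le
    simp_rw [mul_sub, exp_sub]
    exact (integrable_exp_mul_of_mem_Icc hfm.aemeasurable
      (ae_of_all _ fun S => abs_le.1 (hC S))).div_const _
  mgf_le t := by
    simp only [sub_eq_add_neg, mgf_add_const]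
    calc mgf f (Measure.pi μ) t * exp (t * -∫ S', f S' ∂Measure.pi μ)
        ≤ exp (t * ∫ S, f S ∂Measure.pi μ + (∑ i, c i ^ 2 : ℝ≥0) * t ^ 2 / 2)
          * exp (t * -∫ S', f S' ∂Measure.pi μ) := by
          gcongr
          exact hf.mgf_pi_le hfm μ t
      _ = exp ((∑ i, c i ^ 2 : ℝ≥0) * t ^ 2 / 2) := by
          rw [← exp_add]
          ring_nf

end BoundedDifferences

/-- p-th moment form of McDiarmid's inequality for real-valued functions with
bounded differences. -/
theorem stmt_2 {Z : Type*} [MeasurableSpace Z]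
    (n : ℕ) (μ : Fin n → Measure Z) [∀ i, IsProbabilityMeasure (μ i)]
    (f : (Fin n → Z) → ℝ) (hmeas : Measurable f) (β : ℝ)
    (hbd : ∀ (i : Fin n) (S : Fin n → Z) (z' : Z),
      |f S - f (Function.update S i z')| ≤ β)
    (p : ℝ) (hp : 1 < p) :
    (∫ S, |f S - ∫ S', f S' ∂Measure.pi μ| ^ p ∂Measure.pi μ) ^ (1 / p)
      ≤ Real.sqrt (2 * p * n) * β := by
  have hf : BoundedDifferences f fun _ => β.toNNReal :=
    fun i S z => (hbd i S z).trans (Real.le_coe_toNNReal β)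
  have hβ : n = 0 ∨ 0 ≤ β := by
    refine or_iff_not_imp_left.2 fun hn => ?_
    obtain ⟨S⟩ := nonempty_of_isProbabilityMeasure (Measure.pi μ)
    let i : Fin n := ⟨0, Nat.pos_of_ne_zero hn⟩
    simpa using hbd i S (S i)
  calc _ ≤ √(2 * p * (∑ _i : Fin n, β.toNNReal ^ 2 : ℝ≥0)) :=
        (hf.hasSubgaussianMGF_pi hmeas μ).rpow_integral_abs_rpow_le hp.le
    _ = √(2 * p * n) * β := by
        rcases hβ with rfl | hβ
        · simp
        · have hsum : (∑ _i : Fin n, β.toNNReal ^ 2 : ℝ≥0) = (n * β ^ 2 : ℝ) := by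
            simp [Real.coe_toNNReal β hβ]
          rw [hsum, ← mul_assoc, sqrt_mul' _ (sq_nonneg β), sqrt_sq hβ]
end

section
/- Suppose the algorithm A is β-uniformly-stable in gradients. Define p(z_1, …, z_n) := E_{Z∼ρ}[‖∇f(A(z_1, …, z_n); Z)‖₂²] and, for each i ∈ [n], p_i(z_1, …, z_n) := sup_{z_i' ∈ Z} p(z_1, …, z_{i−1}, z_i', z_{i+1}, …, z_n). Then for every (z_1, …, z_n) ∈ Z^n: Σ_{i=1}^n (p_i(z_1, …, z_n) − p(z_1, …, z_n))² ≤ 8nβ² · p(z_1, …, z_n) + 2nβ⁴; that is, p is (8nβ², 2nβ⁴)-weakly self-bounded. -/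
/-!
Replacing one sample moves `∇f(A(S); z)` by at most `β` for every `z`, so pointwise
`‖∇f(A(S^{(i)}); z)‖² ≤ (‖∇f(A(S); z)‖ + β)²`. Integrating and using
`E‖∇f‖ ≤ √(E‖∇f‖²) = √p` gives `p ≤ p_i ≤ p + 2β√p + β²`, and
`(2β√p + β²)² ≤ 8β²p + 2β⁴` by `(x + y)² ≤ 2x² + 2y²`.
Measurability of `z ↦ ∇f(w; z)`, needed for the integrals to be meaningful, comes from
writing each directional derivative as a limit of difference quotients.
-/

open MeasureTheory Filter Topology

theorem measurable_fderiv_apply_of_differentiableAt {Z E : Type*} [MeasurableSpace Z]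
    [NormedAddCommGroup E] [NormedSpace ℝ E] {f : E → Z → ℝ} (hf : ∀ w, Measurable (f w))
    {w : E} (hd : ∀ z, DifferentiableAt ℝ (fun w => f w z) w) (v : E) :
    Measurable fun z => fderiv ℝ (fun w => f w z) w v := by
  have hinv : Tendsto (fun n : ℕ => (n : ℝ)⁻¹) atTop (𝓝[≠] 0) :=
    tendsto_nhdsWithin_of_tendsto_nhds_of_eventually_within _ tendsto_inv_atTop_nhds_zero_nat
      (eventually_ne_atTop 0 |>.mono fun n hn => by simpa using hn)
  refine measurable_of_tendsto_metrizable
    (f := fun (n : ℕ) z => (n : ℝ)⁻¹⁻¹ • (f (w + (n : ℝ)⁻¹ • v) z - f w z))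
    (fun n => ((hf (w + (n : ℝ)⁻¹ • v)).sub (hf w)).const_smul (n : ℝ)⁻¹⁻¹)
    (tendsto_pi_nhds.2 fun z => ?_)
  exact ((hd z).hasFDerivAt.hasLineDerivAt v).tendsto_slope_zero.comp hinv

theorem gradient_eq_sum_orthonormalBasis {ι E : Type*} [Fintype ι] [NormedAddCommGroup E]
    [InnerProductSpace ℝ E] [CompleteSpace E] (b : OrthonormalBasis ι ℝ E) (g : E → ℝ) (w : E) :
    gradient g w = ∑ i, fderiv ℝ g w (b i) • b i := by
  conv_lhs => rw [← b.sum_repr' (gradient g w)]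
  congr! 2 with i
  rw [gradient, real_inner_comm, InnerProductSpace.toDual_symm_apply]

theorem measurable_gradient_of_differentiableAt {Z E : Type*} [MeasurableSpace Z]
    [NormedAddCommGroup E] [InnerProductSpace ℝ E] [FiniteDimensional ℝ E]
    [MeasurableSpace E] [BorelSpace E] {f : E → Z → ℝ} (hf : ∀ w, Measurable (f w))
    {w : E} (hd : ∀ z, DifferentiableAt ℝ (fun w => f w z) w) :
    Measurable fun z => gradient (fun w => f w z) w := by
  simp only [gradient_eq_sum_orthonormalBasis (stdOrthonormalBasis ℝ E)]
  exact Finset.measurable_sum _ fun i _ =>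
    (measurable_fderiv_apply_of_differentiableAt hf hd _).smul_const _

theorem sq_integral_le_integral_sq {Ω : Type*} [MeasurableSpace Ω] {μ : Measure Ω}
    [IsProbabilityMeasure μ] {X : Ω → ℝ} (hX : MemLp X 2 μ) :
    (∫ x, X x ∂μ) ^ 2 ≤ ∫ x, X x ^ 2 ∂μ := by
  have := ProbabilityTheory.variance_nonneg X μ
  rw [ProbabilityTheory.variance_eq_sub hX] at this
  simpa using this

theorem integral_norm_sq_le_of_norm_sub_le {Ω E : Type*} [MeasurableSpace Ω] {μ : Measure Ω}
    [IsProbabilityMeasure μ] [NormedAddCommGroup E] {u v : Ω → E}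
    (hu : AEStronglyMeasurable u μ) {β : ℝ} (huv : ∀ x, ‖u x - v x‖ ≤ β) :
    ∫ x, ‖v x‖ ^ 2 ∂μ
      ≤ ∫ x, ‖u x‖ ^ 2 ∂μ + 2 * β * √(∫ x, ‖u x‖ ^ 2 ∂μ) + β ^ 2 := by
  have hβ : 0 ≤ β := by
    obtain ⟨x⟩ := nonempty_of_isProbabilityMeasure μ
    exact (norm_nonneg _).trans (huv x)
  have hvu : ∀ x, ‖v x‖ ≤ ‖u x‖ + β := fun x => by
    linarith [norm_le_norm_add_norm_sub (u x) (v x), huv x]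
  have huv' : ∀ x, ‖u x‖ ≤ ‖v x‖ + β := fun x => by
    linarith [norm_le_norm_add_norm_sub' (u x) (v x), huv x]
  by_cases hint : Integrable (fun x => ‖u x‖ ^ 2) μ
  · have hmem : MemLp (fun x => ‖u x‖) 2 μ :=
      ((memLp_two_iff_integrable_sq_norm hu).2 hint).norm
    have hnorm : Integrable (fun x => ‖u x‖) μ := hmem.integrable one_le_two
    have hmean : ∫ x, ‖u x‖ ∂μ ≤ √(∫ x, ‖u x‖ ^ 2 ∂μ) :=
      Real.le_sqrt_of_sq_le (sq_integral_le_integral_sq hmem)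
    have hsq : (fun x => (‖u x‖ + β) ^ 2) = fun x => ‖u x‖ ^ 2 + 2 * β * ‖u x‖ + β ^ 2 := by
      ext x; ring
    have hlin : Integrable (fun x => ‖u x‖ ^ 2 + 2 * β * ‖u x‖) μ := hint.add (hnorm.const_mul _)
    calc ∫ x, ‖v x‖ ^ 2 ∂μ ≤ ∫ x, (‖u x‖ + β) ^ 2 ∂μ := by
          refine integral_mono_of_nonneg (.of_forall fun x => by positivity) ?_
            (.of_forall fun x => pow_le_pow_left₀ (norm_nonneg _) (hvu x) 2)
          rw [hsq]
          exact hlin.add (integrable_const _)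
      _ = ∫ x, ‖u x‖ ^ 2 ∂μ + 2 * β * ∫ x, ‖u x‖ ∂μ + β ^ 2 := by
          rw [hsq, integral_add hlin (integrable_const _), integral_add hint (hnorm.const_mul _),
            integral_const_mul]
          simp
      _ ≤ _ := by gcongr
  · -- Neither `‖u‖²` nor `‖v‖²` is integrable, so both integrals take the junk value 0.
    have hvint : ¬Integrable (fun x => ‖v x‖ ^ 2) μ := fun hv => hint <| by
      refine ((hv.const_mul 2).add (integrable_const (2 * β ^ 2))).mono'
        (hu.norm.pow 2) (.of_forall fun x => ?_)
      rw [Real.norm_of_nonneg (by positivity)]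
      change ‖u x‖ ^ 2 ≤ 2 * ‖v x‖ ^ 2 + 2 * β ^ 2
      nlinarith [huv' x, norm_nonneg (u x), sq_nonneg (‖v x‖ - β)]
    rw [integral_undef hint, integral_undef hvint]
    positivity

theorem sub_sq_le_of_le_add_sqrt {p s β : ℝ} (hp : 0 ≤ p) (hps : p ≤ s)
    (hs : s ≤ p + 2 * β * √p + β ^ 2) : (s - p) ^ 2 ≤ 8 * β ^ 2 * p + 2 * β ^ 4 := by
  have hsqrt := Real.sq_sqrt hp
  calc (s - p) ^ 2 ≤ (2 * β * √p + β ^ 2) ^ 2 :=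
        pow_le_pow_left₀ (sub_nonneg.2 hps) (by linarith) 2
    _ ≤ 8 * β ^ 2 * p + 2 * β ^ 4 := by
        nlinarith [sq_nonneg (2 * β * √p - β ^ 2)]

theorem stmt_17_general {Z : Type*} [MeasurableSpace Z]
    (ρ : Measure Z) [IsProbabilityMeasure ρ]
    (d n : ℕ)
    (f : EuclideanSpace ℝ (Fin d) → Z → ℝ)
    (A : (Fin n → Z) → EuclideanSpace ℝ (Fin d))
    (hfm : ∀ w, Measurable (f w))
    (hdiff : ∀ z, Differentiable ℝ (fun w => f w z))
    (β : ℝ)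
    -- A is β-uniformly-stable in gradients
    (hstab : ∀ (S : Fin n → Z) (i : Fin n) (z' z : Z),
      ‖gradient (fun w => f w z) (A S)
        - gradient (fun w => f w z) (A (Function.update S i z'))‖ ≤ β)
    -- the suprema defining p_i are finite
    (hbdd : ∀ (i : Fin n) (S : Fin n → Z),
      BddAbove (Set.range fun z' : Z =>
        ∫ z, ‖gradient (fun w => f w z) (A (Function.update S i z'))‖ ^ 2 ∂ρ))
    (S : Fin n → Z) :
    ∑ i : Fin n,
        ((⨆ z' : Z, ∫ z, ‖gradient (fun w => f w z)
              (A (Function.update S i z'))‖ ^ 2 ∂ρ)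
          - ∫ z, ‖gradient (fun w => f w z) (A S)‖ ^ 2 ∂ρ) ^ 2
      ≤ 8 * n * β ^ 2 * (∫ z, ‖gradient (fun w => f w z) (A S)‖ ^ 2 ∂ρ)
        + 2 * n * β ^ 4 := by
  have hmeas : AEStronglyMeasurable (fun z => gradient (fun w => f w z) (A S)) ρ :=
    (measurable_gradient_of_differentiableAt hfm fun z => (hdiff z).differentiableAt)
      |>.aestronglyMeasurable
  set p := ∫ z, ‖gradient (fun w => f w z) (A S)‖ ^ 2 ∂ρ
  have hterm : ∀ i, ((⨆ z' : Z, ∫ z, ‖gradient (fun w => f w z)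
      (A (Function.update S i z'))‖ ^ 2 ∂ρ) - p) ^ 2 ≤ 8 * β ^ 2 * p + 2 * β ^ 4 := fun i => by
    have : Nonempty Z := ⟨S i⟩
    refine sub_sq_le_of_le_add_sqrt (integral_nonneg fun z => by positivity) ?_
      (ciSup_le fun z' => integral_norm_sq_le_of_norm_sub_le hmeas (hstab S i z'))
    simpa [p] using le_ciSup (hbdd i S) (S i)
  calc _ ≤ ∑ _i : Fin n, (8 * β ^ 2 * p + 2 * β ^ 4) := Finset.sum_le_sum fun i _ => hterm i
    _ = _ := by simp only [Finset.sum_const, Finset.card_univ, Fintype.card_fin, nsmul_eq_mul]; ring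

/-- The function `p(S) = E_Z[‖∇f(A(S); Z)‖²]` is `(8nβ², 2nβ⁴)`-weakly
self-bounded when `A` is `β`-uniformly-stable in gradients. -/
theorem stmt_17 {Z : Type*} [MeasurableSpace Z] [Nonempty Z]
    (ρ : Measure Z) [IsProbabilityMeasure ρ]
    (d n : ℕ)
    (f : EuclideanSpace ℝ (Fin d) → Z → ℝ)
    (A : (Fin n → Z) → EuclideanSpace ℝ (Fin d))
    (hfm : ∀ w, Measurable (f w))
    (hdiff : ∀ z, Differentiable ℝ (fun w => f w z))
    (β : ℝ)
    -- A is β-uniformly-stable in gradients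
    (hstab : ∀ (S : Fin n → Z) (i : Fin n) (z' z : Z),
      ‖gradient (fun w => f w z) (A S)
        - gradient (fun w => f w z) (A (Function.update S i z'))‖ ≤ β)
    -- the suprema defining p_i are finite
    (hbdd : ∀ (i : Fin n) (S : Fin n → Z),
      BddAbove (Set.range fun z' : Z =>
        ∫ z, ‖gradient (fun w => f w z) (A (Function.update S i z'))‖ ^ 2 ∂ρ))
    (S : Fin n → Z) :
    ∑ i : Fin n,
        ((⨆ z' : Z, ∫ z, ‖gradient (fun w => f w z)
              (A (Function.update S i z'))‖ ^ 2 ∂ρ)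
          - ∫ z, ‖gradient (fun w => f w z) (A S)‖ ^ 2 ∂ρ) ^ 2
      ≤ 8 * n * β ^ 2 * (∫ z, ‖gradient (fun w => f w z) (A S)‖ ^ 2 ∂ρ)
        + 2 * n * β ^ 4 :=
  stmt_17_general ρ d n f A hfm hdiff β hstab hbdd S
end
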